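/- arXiv:2005.05713 — 2 statements merged into one kernel-verified Lean document; each statement's English description precedes it below -/
import Mathlib

section
/- Let A be a finite set with at least 3 elements and let p : A → ℝ be a probability distribution (p(a) ≥ 0, summing to 1) whose support has at least 3 elements. Then there exists q : A → ℝ such that for every a ∈ A: q(a) is rational, 0 ≤ q(a) ≤ p(a), and p(a) - q(a) ≤ (1/2) · Σ_{b ∈ A} (p(b) - q(b)). -/
/-!
Let `δ > 0` be at most every nonzero value of `p`. Rounding each nonzero `p a` down to a rational
at distance between `2δ/3` and `δ` keeps it nonnegative, and with at least three such points the
total deficit is at least `2δ`, so no single deficit (all are at most `δ`) exceeds half of it.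
-/

open Finset

lemma Finite.exists_pos_le_of_pos {ι : Type*} [Finite ι] (f : ι → ℝ) :
    ∃ δ > 0, ∀ i, 0 < f i → δ ≤ f i := by
  by_cases h : ∃ i, 0 < f i
  · obtain ⟨i, hi⟩ := h
    have : Nonempty {i // 0 < f i} := ⟨⟨i, hi⟩⟩
    obtain ⟨⟨j, hj⟩, hmin⟩ := Finite.exists_min (fun i : {i // 0 < f i} => f i)
    exact ⟨f j, hj, fun i hi => hmin ⟨i, hi⟩⟩
  · exact ⟨1, one_pos, fun i hi => (h ⟨i, hi⟩).elim⟩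

lemma exists_rat_le_sub_le {x δ : ℝ} (hδ : 0 < δ) (hx : 0 ≤ x) (hδx : x ≠ 0 → δ ≤ x) :
    ∃ r : ℚ, 0 ≤ (r : ℝ) ∧ (r : ℝ) ≤ x ∧ x - r ≤ δ ∧ (x ≠ 0 → 2 * δ ≤ 3 * (x - r)) := by
  rcases eq_or_ne x 0 with rfl | hx0
  · exact ⟨0, by simp [hδ.le]⟩
  · obtain ⟨r, hlo, hhi⟩ := exists_rat_btwn (show x - δ < x - 2 * δ / 3 by linarith)
    have := hδx hx0
    exact ⟨r, by linarith, by linarith, by linarith, fun _ => by linarith⟩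

lemma le_half_sum_of_le_of_card_le {ι : Type*} [Fintype ι] {K : Type*} [Field K] [LinearOrder K]
    [IsStrictOrderedRing K] {d : ι → K} {δ : K} (s : Finset ι) (hd : ∀ i, 0 ≤ d i)
    (hle : ∀ i, d i ≤ δ) (hlarge : ∀ i ∈ s, 2 * δ ≤ 3 * d i) (hs : 3 ≤ #s) (i : ι) :
    d i ≤ 1 / 2 * ∑ j, d j := by
  have hsum : #s * (2 * δ) ≤ 3 * ∑ j, d j := calc
    #s * (2 * δ) ≤ ∑ j ∈ s, 3 * d j := by
      simpa using card_nsmul_le_sum s (fun j => 3 * d j) (2 * δ) hlarge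
    _ = 3 * ∑ j ∈ s, d j := by rw [mul_sum]
    _ ≤ 3 * ∑ j, d j :=
      mul_le_mul_of_nonneg_left (sum_le_sum_of_subset_of_nonneg (subset_univ s)
        fun j _ _ => hd j) (by norm_num)
  have hδ : 0 ≤ δ := (hd i).trans (hle i)
  have hs' : (3 : K) ≤ #s := by exact_mod_cast hs
  nlinarith [hle i]

theorem stmt1_general {A : Type*} [Fintype A] (p : A → ℝ)
    (hnonneg : ∀ a, 0 ≤ p a)
    (hsupp : 3 ≤ (Finset.univ.filter (fun a => p a ≠ 0)).card) :
    ∃ q : A → ℝ, ∀ a,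
      (∃ r : ℚ, q a = (r : ℝ)) ∧ 0 ≤ q a ∧ q a ≤ p a ∧
      p a - q a ≤ (1 / 2) * ∑ b, (p b - q b) := by
  obtain ⟨δ, hδ, hδp⟩ := Finite.exists_pos_le_of_pos p
  have hround (a : A) := exists_rat_le_sub_le hδ (hnonneg a)
    fun h => hδp a ((hnonneg a).lt_of_ne' h)
  choose r hr0 hrp hrδ hr using hround
  refine ⟨fun a => r a, fun a => ⟨⟨r a, rfl⟩, hr0 a, hrp a, ?_⟩⟩
  exact le_half_sum_of_le_of_card_le _ (fun b => sub_nonneg.mpr (hrp b)) hrδ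
    (fun b hb => hr b (mem_filter.mp hb).2) hsupp a

theorem stmt1 {A : Type*} [Fintype A] (p : A → ℝ)
    (hnonneg : ∀ a, 0 ≤ p a) (hsum : ∑ a, p a = 1)
    (hsupp : 3 ≤ (Finset.univ.filter (fun a => p a ≠ 0)).card) :
    ∃ q : A → ℝ, ∀ a,
      (∃ r : ℚ, q a = (r : ℝ)) ∧ 0 ≤ q a ∧ q a ≤ p a ∧
      p a - q a ≤ (1 / 2) * ∑ b, (p b - q b) :=
  stmt1_general p hnonneg hsupp
end

section
/- Let f : [0,1] → ℝ≥0 be a probability density (∫₀¹ f = 1) with CDF F, and let η : [0,1] → [0,1] be measurable with m := ∫₀¹ η(u) f(u) du ∈ (0,1). Suppose x ∈ (0,1) satisfies F(x) = m, and define the cutoff strategy η̃(u) = 1 for u ≤ x and η̃(u) = 0 for u > x. Then for every q ∈ [0,1], ∫₀¹ [ (1-u)·q·η̃(u) + u·(1-q)·(1-η̃(u)) ] f(u) du ≥ ∫₀¹ [ (1-u)·q·η(u) + u·(1-q)·(1-η(u)) ] f(u) du, i.e., against any opponent who plays L with probability q, the cutoff strategy with the same average L-probability yields weakly higher ex-ante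 payoff. -/
open MeasureTheory

/-! Since `(1 - u) q - u (1 - q) = q - u`, the payoff gain of `η̃` over `η` is
`∫ (q - u) d` with `d = (η̃ - η) f`. The weight `d` is nonnegative below `x`, nonpositive above
`x`, and has total mass zero because `F x = m`; so `q - u` may be replaced by `x - u`, and
`(x - u) d ≥ 0` pointwise. -/

theorem integral_mul_nonneg_of_antitone_of_sign_change {α : Type*} [MeasurableSpace α]
    [LinearOrder α] {μ : Measure α} {w d : α → ℝ} {x : α} (hw : Antitone w)
    (hd : Integrable d μ) (hwd : Integrable (fun u => w u * d u) μ) (hd0 : ∫ u, d u ∂μ = 0)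
    (hd_le : ∀ᵐ u ∂μ, u ≤ x → 0 ≤ d u) (hd_gt : ∀ᵐ u ∂μ, x < u → d u ≤ 0) :
    0 ≤ ∫ u, w u * d u ∂μ := by
  have hshift : ∫ u, w u * d u ∂μ = ∫ u, (w u - w x) * d u ∂μ := by
    simp_rw [sub_mul]
    rw [integral_sub hwd (hd.const_mul _), integral_const_mul, hd0, mul_zero, sub_zero]
  rw [hshift]
  refine integral_nonneg_of_ae ?_
  filter_upwards [hd_le, hd_gt] with u hle hgt
  rcases le_or_gt u x with h | h
  · exact mul_nonneg (sub_nonneg.2 (hw h)) (hle h)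
  · exact mul_nonneg_of_nonpos_of_nonpos (sub_nonpos.2 (hw h.le)) (hgt h)

theorem IntervalIntegrable.indicator {E : Type*} [NormedAddCommGroup E] {f : ℝ → E} {μ : Measure ℝ} {a b : ℝ}
    (hf : IntervalIntegrable f μ a b) {s : Set ℝ} (hs : MeasurableSet s) :
    IntervalIntegrable (s.indicator f) μ a b :=
  ⟨hf.1.indicator hs, hf.2.indicator hs⟩

theorem ite_le_mul_eq_indicator (f : ℝ → ℝ) (x : ℝ) :
    (fun u => (if u ≤ x then (1:ℝ) else 0) * f u) = {u | u ≤ x}.indicator f := by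
  ext u
  by_cases h : u ≤ x <;> simp [h]

theorem ite_le_sub_mul_sign_change {x u e c : ℝ} (he : e ∈ Set.Icc (0:ℝ) 1) (hc : 0 ≤ c) :
    (u ≤ x → 0 ≤ ((if u ≤ x then 1 else 0) - e) * c)
      ∧ (x < u → ((if u ≤ x then 1 else 0) - e) * c ≤ 0) := by
  refine ⟨fun h => mul_nonneg ?_ hc, fun h => mul_nonpos_of_nonpos_of_nonneg ?_ hc⟩
  · rw [if_pos h]; linarith [he.2]
  · rw [if_neg h.not_ge]; linarith [he.1]

section Payoff

variable {f η ζ : ℝ → ℝ} {a b q : ℝ}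

theorem intervalIntegrable_payoff (hf : IntervalIntegrable f volume a b)
    (hηf : IntervalIntegrable (fun u => η u * f u) volume a b) :
    IntervalIntegrable (fun u => ((1 - u) * q * η u + u * (1 - q) * (1 - η u)) * f u)
      volume a b := by
  have h : IntervalIntegrable (fun u => u * (1 - q) * f u + (q - u) * (η u * f u)) volume a b :=
    (hf.continuousOn_mul (by fun_prop)).add (hηf.continuousOn_mul (by fun_prop))
  convert h using 2 with u
  ring

theorem integral_payoff_sub_integral_payoff (hf : IntervalIntegrable f volume a b)
    (hηf : IntervalIntegrable (fun u => η u * f u) volume a b)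
    (hζf : IntervalIntegrable (fun u => ζ u * f u) volume a b) :
    (∫ u in a..b, ((1 - u) * q * η u + u * (1 - q) * (1 - η u)) * f u)
      - ∫ u in a..b, ((1 - u) * q * ζ u + u * (1 - q) * (1 - ζ u)) * f u
      = ∫ u in a..b, (q - u) * ((η u - ζ u) * f u) := by
  rw [← intervalIntegral.integral_sub (intervalIntegrable_payoff hf hηf)
    (intervalIntegrable_payoff hf hζf)]
  congr with u
  ring

end Payoff

theorem stmt16_general (f η : ℝ → ℝ)
    (hf : ∀ u ∈ Set.Icc (0:ℝ) 1, 0 ≤ f u)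
    (hfint : IntervalIntegrable f volume 0 1)
    (hηrange : ∀ u ∈ Set.Icc (0:ℝ) 1, η u ∈ Set.Icc (0:ℝ) 1)
    (hηfint : IntervalIntegrable (fun u => η u * f u) volume 0 1)
    (m : ℝ) (hm : m = ∫ u in (0:ℝ)..1, η u * f u)
    (x : ℝ) (hx : x ∈ Set.Ioo (0:ℝ) 1)
    (hFx : (∫ u in (0:ℝ)..x, f u) = m) :
    ∀ q ∈ Set.Icc (0:ℝ) 1,
      (∫ u in (0:ℝ)..1,
        ((1 - u) * q * (if u ≤ x then (1:ℝ) else 0)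
          + u * (1 - q) * (1 - (if u ≤ x then (1:ℝ) else 0))) * f u)
      ≥ ∫ u in (0:ℝ)..1,
          ((1 - u) * q * η u + u * (1 - q) * (1 - η u)) * f u := by
  intro q _
  set η' : ℝ → ℝ := fun u => if u ≤ x then 1 else 0
  have hcut : (fun u => η' u * f u) = {u | u ≤ x}.indicator f := ite_le_mul_eq_indicator f x
  have hcutf : IntervalIntegrable (fun u => η' u * f u) volume 0 1 :=
    hcut ▸ hfint.indicator measurableSet_Iic
  have hd : IntervalIntegrable (fun u => (η' u - η u) * f u) volume 0 1 := by
    simpa only [sub_mul] using hcutf.sub hηfint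
  have hd0 : ∫ u in (0:ℝ)..1, (η' u - η u) * f u = 0 := by
    simp_rw [sub_mul]
    rw [intervalIntegral.integral_sub hcutf hηfint, hcut,
      intervalIntegral.integral_indicator (Set.Ioo_subset_Icc_self hx), hFx, hm, sub_self]
  have hsign (u : ℝ) (hu : u ∈ Set.Ioc (0:ℝ) 1) :=
    ite_le_sub_mul_sign_change (x := x) (u := u) (hηrange u (Set.Ioc_subset_Icc_self hu))
      (hf u (Set.Ioc_subset_Icc_self hu))
  rw [ge_iff_le, ← sub_nonneg, integral_payoff_sub_integral_payoff hfint hcutf hηfint,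
    intervalIntegral.integral_of_le zero_le_one]
  refine integral_mul_nonneg_of_antitone_of_sign_change (x := x) (fun a b h => by linarith)
    hd.1 (hd.continuousOn_mul (by fun_prop)).1 ?_ ?_ ?_
  · rwa [← intervalIntegral.integral_of_le zero_le_one]
  · exact ae_restrict_of_forall_mem measurableSet_Ioc fun u hu => (hsign u hu).1
  · exact ae_restrict_of_forall_mem measurableSet_Ioc fun u hu => (hsign u hu).2

theorem stmt16 (f η : ℝ → ℝ)
    (hf : ∀ u ∈ Set.Icc (0:ℝ) 1, 0 ≤ f u)
    (hfint : IntervalIntegrable f volume 0 1)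
    (hprob : ∫ u in (0:ℝ)..1, f u = 1)
    (hη : Measurable η) (hηrange : ∀ u ∈ Set.Icc (0:ℝ) 1, η u ∈ Set.Icc (0:ℝ) 1)
    (hηfint : IntervalIntegrable (fun u => η u * f u) volume 0 1)
    (m : ℝ) (hm : m = ∫ u in (0:ℝ)..1, η u * f u) (hm0 : 0 < m) (hm1 : m < 1)
    (x : ℝ) (hx : x ∈ Set.Ioo (0:ℝ) 1)
    (hFx : (∫ u in (0:ℝ)..x, f u) = m) :
    ∀ q ∈ Set.Icc (0:ℝ) 1,
      (∫ u in (0:ℝ)..1,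
        ((1 - u) * q * (if u ≤ x then (1:ℝ) else 0)
          + u * (1 - q) * (1 - (if u ≤ x then (1:ℝ) else 0))) * f u)
      ≥ ∫ u in (0:ℝ)..1,
          ((1 - u) * q * η u + u * (1 - q) * (1 - η u)) * f u :=
  stmt16_general f η hf hfint hηrange hηfint m hm x hx hFx
end
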